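/- arXiv:1509.08328 — 5 statements merged into one kernel-verified Lean document; each statement's English description precedes it below -/
import Mathlib

section
/- If (V₁, V₂) solve V₁'' = V₂² V₁, V₂'' = V₁² V₂ on ℝ, then the pair (x V₁' + V₁, x V₂' + V₂) lies in the kernel of the linearized operator L: that is, setting E₁ = x V₁' + V₁ and E₂ = x V₂' + V₂, one has -E₁'' + V₂² E₁ + 2 V₁ V₂ E₂ = 0 and -E₂'' + V₁² E₂ + 2 V₁ V₂ E₁ = 0. -/
/-! The system is invariant under the scaling `V(x) ↦ λ V(λ x)`; differentiating the family of
solutions at `λ = 1` yields the generator `x V' + V` of the scaling, which therefore solves the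
linearized equation. Concretely, `(x V' + V)'' = x V''' + 3 V''`, and expanding `V''' = (W² V)'`
makes everything cancel. -/

theorem deriv_deriv_mul_deriv_add {f : ℝ → ℝ} (hf : Differentiable ℝ f)
    (hf' : Differentiable ℝ (deriv f)) (hf'' : Differentiable ℝ (deriv (deriv f))) (x : ℝ) :
    deriv (deriv fun y => y * deriv f y + f y) x =
      x * deriv (deriv (deriv f)) x + 3 * deriv (deriv f) x := by
  have hfirst : deriv (fun y => y * deriv f y + f y) =
      fun y => y * deriv (deriv f) y + 2 * deriv f y := by
    funext y
    rw [(((hasDerivAt_id' y).fun_mul (hf' y).hasDerivAt).fun_add (hf y).hasDerivAt).deriv]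
    ring
  rw [hfirst, (((hasDerivAt_id' x).fun_mul (hf'' x).hasDerivAt).fun_add
    ((hf' x).hasDerivAt.const_mul 2)).deriv]
  ring

theorem hasDerivAt_deriv_deriv_of_eq_sq_mul {V W : ℝ → ℝ} (hV : Differentiable ℝ V)
    (hW : Differentiable ℝ W) (heq : ∀ x, deriv (deriv V) x = W x ^ 2 * V x) (x : ℝ) :
    HasDerivAt (deriv (deriv V)) (2 * W x * deriv W x * V x + W x ^ 2 * deriv V x) x := by
  rw [funext heq]
  exact (((hW x).hasDerivAt.fun_pow 2).fun_mul (hV x).hasDerivAt).congr_deriv (by push_cast; ring)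

theorem linearized_eq_scaling_generator {V W : ℝ → ℝ} (hV : ContDiff ℝ 2 V)
    (hW : Differentiable ℝ W) (heq : ∀ x, deriv (deriv V) x = W x ^ 2 * V x) (x : ℝ) :
    -(deriv (deriv fun y => y * deriv V y + V y) x) + W x ^ 2 * (x * deriv V x + V x)
      + 2 * V x * W x * (x * deriv W x + W x) = 0 := by
  have hV₀ : Differentiable ℝ V := hV.differentiable (by norm_num)
  have hV₁ : Differentiable ℝ (deriv V) := hV.differentiable_deriv_two
  have hthird := hasDerivAt_deriv_deriv_of_eq_sq_mul hV₀ hW heq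
  rw [deriv_deriv_mul_deriv_add hV₀ hV₁ (fun y => (hthird y).differentiableAt),
    (hthird x).deriv, heq]
  ring

theorem stmt_9 (V₁ V₂ : ℝ → ℝ)
    (hV₁ : ContDiff ℝ 3 V₁) (hV₂ : ContDiff ℝ 3 V₂)
    (heq₁ : ∀ x, deriv (deriv V₁) x = (V₂ x)^2 * V₁ x)
    (heq₂ : ∀ x, deriv (deriv V₂) x = (V₁ x)^2 * V₂ x)
    (E₁ E₂ : ℝ → ℝ)
    (hE₁ : ∀ x, E₁ x = x * deriv V₁ x + V₁ x)
    (hE₂ : ∀ x, E₂ x = x * deriv V₂ x + V₂ x) :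
    (∀ x, -(deriv (deriv E₁) x) + (V₂ x)^2 * E₁ x + 2 * V₁ x * V₂ x * E₂ x = 0) ∧
    (∀ x, -(deriv (deriv E₂) x) + (V₁ x)^2 * E₂ x + 2 * V₁ x * V₂ x * E₁ x = 0) := by
  obtain rfl := funext hE₁
  obtain rfl := funext hE₂
  have hV₁' : ContDiff ℝ 2 V₁ := hV₁.of_le (by norm_num)
  have hV₂' : ContDiff ℝ 2 V₂ := hV₂.of_le (by norm_num)
  refine ⟨linearized_eq_scaling_generator hV₁' (hV₂.differentiable (by norm_num)) heq₁,
    fun x => ?_⟩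
  rw [mul_right_comm 2 (V₁ x)]
  exact linearized_eq_scaling_generator hV₂' (hV₁.differentiable (by norm_num)) heq₂ x
end

section
/- Suppose u, q : [x₀, ∞) → ℝ are smooth, q(x) → +∞ as x → +∞, u has at most polynomial growth, and -u'' + q u = f where |f(x)| ≤ C e^{-c₀ x} for some c₀, C > 0. Then there exist C₁, x₁ such that |u(x)| ≤ C₁ e^{-c₀ x} for all x ≥ x₁. -/
/-!
Once `q ≥ c₀² + 1` on `[x₁, ∞)`, the function `φ = K e^{-c₀x} + ε e^{c₀x}` (with `φ'' = c₀² φ`)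
is a barrier for `±u`: wherever `u > φ`, the equation forces `(u - φ)'' > 0`, so `u - φ` has no
positive interior maximum. The polynomial growth of `u` makes `u - φ` negative far out, and `K` is
chosen so that `u - φ ≤ 0` at `x₁`; the maximum principle on `[x₁, R]` and `ε → 0` then give
`|u| ≤ K e^{-c₀x}`.
-/

open Filter Real Set Topology Asymptotics

theorem IsLocalMax.deriv_deriv_nonpos {f : ℝ → ℝ} {a : ℝ} (h : IsLocalMax f a)
    (hf : ∀ᶠ x in 𝓝 a, DifferentiableAt ℝ f x) : deriv (deriv f) a ≤ 0 := by
  by_contra! hpos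
  -- `f' a = 0` and `f'' a > 0` make `f'` positive just right of `a`, so `f` increases there.
  have hsign := eventually_nhdsWithin_sign_eq_of_deriv_pos hpos h.deriv_eq_zero
  have hright : ∀ᶠ x in 𝓝[>] a, DifferentiableAt ℝ f x ∧ 0 < deriv f x ∧ f x ≤ f a :=
    (hf.filter_mono nhdsWithin_le_nhds).and <| (deriv_pos_right_of_sign_deriv
      (hsign.filter_mono nhdsWithin_le_nhds)).and (h.filter_mono nhdsWithin_le_nhds)
  obtain ⟨b, hab, hb⟩ := mem_nhdsGT_iff_exists_Ioc_subset.mp hright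
  have hmono : StrictMonoOn f (Icc a b) := by
    refine strictMonoOn_of_deriv_pos (convex_Icc a b) (fun x hx => ?_) (fun x hx => ?_)
    · rcases hx.1.eq_or_lt with rfl | hax
      · exact hf.self_of_nhds.continuousAt.continuousWithinAt
      · exact (hb ⟨hax, hx.2⟩).1.continuousAt.continuousWithinAt
    · rw [interior_Icc] at hx
      exact (hb (Ioo_subset_Ioc_self hx)).2.1
  have := hmono (left_mem_Icc.2 hab.le) (right_mem_Icc.2 hab.le) hab
  exact this.not_ge (hb (right_mem_Ioc.2 hab)).2.2

theorem nonpos_on_Icc_of_deriv_deriv_pos {v : ℝ → ℝ} {a b : ℝ} (hcont : ContinuousOn v (Icc a b))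
    (hdiff : DifferentiableOn ℝ v (Ioo a b))
    (hconvex : ∀ x ∈ Ioo a b, 0 < v x → 0 < deriv (deriv v) x)
    (ha : v a ≤ 0) (hb : v b ≤ 0) : ∀ x ∈ Icc a b, v x ≤ 0 := by
  by_contra! ⟨x, hx, hvx⟩
  obtain ⟨c, hc, hmax⟩ := isCompact_Icc.exists_isMaxOn ⟨x, hx⟩ hcont
  have hvc : 0 < v c := hvx.trans_le (hmax hx)
  have hc' : c ∈ Ioo a b :=
    ⟨hc.1.lt_of_ne (by rintro rfl; linarith), hc.2.lt_of_ne (by rintro rfl; linarith)⟩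
  have hloc : IsLocalMax v c := hmax.isLocalMax (Icc_mem_nhds hc'.1 hc'.2)
  have hdiff' : ∀ᶠ y in 𝓝 c, DifferentiableAt ℝ v y :=
    eventually_of_mem (Ioo_mem_nhds hc'.1 hc'.2) fun y hy =>
      hdiff.differentiableAt (Ioo_mem_nhds hy.1 hy.2)
  exact (hloc.deriv_deriv_nonpos hdiff').not_gt (hconvex c hc' hvc)

theorem deriv_deriv_sub_of_hasDerivAt {u v v' : ℝ → ℝ} {v'' x : ℝ}
    (hu : ∀ᶠ y in 𝓝 x, DifferentiableAt ℝ u y) (hu' : DifferentiableAt ℝ (deriv u) x)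
    (hv : ∀ y, HasDerivAt v (v' y) y) (hv' : HasDerivAt v' v'' x) :
    deriv (deriv (u - v)) x = deriv (deriv u) x - v'' := by
  have h : deriv (u - v) =ᶠ[𝓝 x] deriv u - v' :=
    hu.mono fun y hy => (hy.hasDerivAt.sub (hv y)).deriv
  rw [h.deriv_eq]
  exact (hu'.hasDerivAt.sub hv').deriv

theorem hasDerivAt_mul_exp_neg_add_mul_exp (A B c y : ℝ) :
    HasDerivAt (fun y => A * exp (-c * y) + B * exp (c * y))
      (-c * A * exp (-c * y) + c * B * exp (c * y)) y := by
  have hneg := (((hasDerivAt_id' y).const_mul (-c)).exp).const_mul A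
  have hpos := (((hasDerivAt_id' y).const_mul c).exp).const_mul B
  exact (hneg.add hpos).congr_deriv (by ring)

theorem le_mul_exp_neg_of_deriv_deriv_ge {u q : ℝ → ℝ} {x₁ c K : ℝ} (hK : 0 ≤ K)
    (hu : ContDiffOn ℝ 2 u (Ici x₁)) (hq : ∀ x > x₁, c ^ 2 + 1 ≤ q x)
    (hsub : ∀ x > x₁, q x * u x - K * exp (-c * x) ≤ deriv (deriv u) x)
    (hgrowth : u =o[atTop] fun x => exp (c * x)) (hx₁ : u x₁ ≤ K * exp (-c * x₁)) :
    ∀ x ≥ x₁, u x ≤ K * exp (-c * x) := by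
  have hdiff : ∀ x > x₁, DifferentiableAt ℝ u x := fun x hx =>
    (hu.contDiffAt (Ici_mem_nhds hx)).differentiableAt (by norm_num)
  have hdiff' : ∀ x > x₁, DifferentiableAt ℝ (deriv u) x := fun x hx =>
    (((hu.mono Ioi_subset_Ici_self).deriv_of_isOpen (m := 1) isOpen_Ioi
      (by norm_num)).differentiableOn (by norm_num)).differentiableAt (Ioi_mem_nhds hx)
  have hbarrier : ∀ ε > 0, ∀ x ≥ x₁, u x ≤ K * exp (-c * x) + ε * exp (c * x) := by
    intro ε hε x hx
    set φ : ℝ → ℝ := fun y => K * exp (-c * y) + ε * exp (c * y) with hφ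
    have hφ' := hasDerivAt_mul_exp_neg_add_mul_exp K ε c
    obtain ⟨R, hR, hxR⟩ := ((hgrowth.bound hε).and (eventually_ge_atTop x)).exists
    refine sub_nonpos.mp <| nonpos_on_Icc_of_deriv_deriv_pos (v := u - φ) (b := R)
      ((hu.continuousOn.mono Icc_subset_Ici_self).sub
        fun y _ => (hφ' y).continuousAt.continuousWithinAt)
      (fun y hy => ((hdiff y hy.1).sub (hφ' y).differentiableAt).differentiableWithinAt)
      (fun y hy hpos => ?_) ?_ ?_ x ⟨hx, hxR⟩
    · rw [deriv_deriv_sub_of_hasDerivAt (eventually_of_mem (Ioi_mem_nhds hy.1) hdiff)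
        (hdiff' y hy.1) hφ' (hasDerivAt_mul_exp_neg_add_mul_exp (-c * K) (c * ε) c y)]
      have hgap : φ y < u y := sub_pos.mp hpos
      have hu_pos : 0 < u y := (show 0 < φ y by positivity).trans hgap
      have hqu : (c ^ 2 + 1) * u y ≤ q y * u y := mul_le_mul_of_nonneg_right (hq y hy.1) hu_pos.le
      nlinarith [hsub y hy.1, mul_le_mul_of_nonneg_left hgap.le (sq_nonneg c), exp_pos (c * y)]
    · simp only [Pi.sub_apply, hφ, sub_nonpos]
      linarith [mul_pos hε (exp_pos (c * x₁))]
    · simp only [Pi.sub_apply, hφ, sub_nonpos]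
      rw [Real.norm_eq_abs, Real.norm_eq_abs, abs_of_pos (exp_pos _)] at hR
      linarith [le_abs_self (u R), mul_nonneg hK (exp_pos (-c * R)).le]
  intro x hx
  refine le_of_forall_pos_le_add fun δ hδ => ?_
  have := hbarrier (δ / exp (c * x)) (by positivity) x hx
  rwa [div_mul_cancel₀ _ (exp_pos _).ne'] at this

theorem isLittleO_exp_mul_of_abs_le_one_add_pow {u : ℝ → ℝ} {x₀ C c : ℝ} {N : ℕ} (hc : 0 < c)
    (hu : ∀ x ≥ x₀, |u x| ≤ C * (1 + x) ^ N) : u =o[atTop] fun x => exp (c * x) := by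
  have hpoly : u =O[atTop] fun x => (1 + x) ^ N := by
    refine IsBigO.of_bound C ?_
    filter_upwards [eventually_ge_atTop x₀, eventually_ge_atTop (-1)] with x hx₀ hx
    rw [Real.norm_eq_abs, norm_of_nonneg (pow_nonneg (by linarith) N)]
    exact hu x hx₀
  have hshift : (fun x : ℝ => (1 + x) ^ N) =o[atTop] fun x => exp (c * (1 + x)) :=
    (isLittleO_pow_exp_pos_mul_atTop N hc).comp_tendsto
      (tendsto_atTop_add_const_left _ 1 tendsto_id)
  have hexp : (fun x => exp (c * (1 + x))) =O[atTop] fun x => exp (c * x) := by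
    simp only [mul_add, exp_add]
    exact (isBigO_refl _ _).const_mul_left _
  exact hpoly.trans_isLittleO (hshift.trans_isBigO hexp)

theorem stmt_12_general (x₀ c₀ C : ℝ) (N : ℕ) (hc₀ : 0 < c₀) (hC : 0 < C)
    (u q f : ℝ → ℝ)
    (hu : ContDiffOn ℝ 2 u (Set.Ici x₀))
    (hqtop : Tendsto q atTop atTop)
    (hugrowth : ∀ x ≥ x₀, |u x| ≤ C * (1 + x)^N)
    (heq : ∀ x ≥ x₀, -(deriv (deriv u) x) + q x * u x = f x)
    (hf : ∀ x ≥ x₀, |f x| ≤ C * Real.exp (-c₀ * x)) :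
    ∃ C₁ x₁ : ℝ, ∀ x ≥ x₁, |u x| ≤ C₁ * Real.exp (-c₀ * x) := by
  obtain ⟨x₁, hx₀₁, hq⟩ : ∃ x₁ ≥ x₀, ∀ x > x₁, c₀ ^ 2 + 1 ≤ q x := by
    obtain ⟨y, hy⟩ := (hqtop.eventually_ge_atTop (c₀ ^ 2 + 1)).exists_forall_of_atTop
    exact ⟨max y x₀, le_max_right _ _, fun x hx => hy x ((le_max_left _ _).trans hx.le)⟩
  set K := C + |u x₁| * exp (c₀ * x₁)
  have hCK : C ≤ K := le_add_of_nonneg_right (by positivity)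
  have hK₁ : |u x₁| ≤ K * exp (-c₀ * x₁) := by
    have : K * exp (-c₀ * x₁) = C * exp (-c₀ * x₁) + |u x₁| := by
      rw [add_mul, mul_assoc, ← exp_add, neg_mul, add_neg_cancel, exp_zero, mul_one]
    rw [this]; exact le_add_of_nonneg_left (by positivity)
  have hf' : ∀ x > x₁, |f x| ≤ K * exp (-c₀ * x) := fun x hx =>
    (hf x (hx₀₁.trans hx.le)).trans (mul_le_mul_of_nonneg_right hCK (exp_pos _).le)
  have hu₁ : ContDiffOn ℝ 2 u (Ici x₁) := hu.mono (Ici_subset_Ici.2 hx₀₁)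
  have hgrowth := isLittleO_exp_mul_of_abs_le_one_add_pow hc₀ hugrowth
  have hupper := le_mul_exp_neg_of_deriv_deriv_ge (hC.le.trans hCK) hu₁ hq
    (fun x hx => by linarith [heq x (hx₀₁.trans hx.le), le_abs_self (f x), hf' x hx])
    hgrowth ((le_abs_self _).trans hK₁)
  have hlower := le_mul_exp_neg_of_deriv_deriv_ge (hC.le.trans hCK) hu₁.neg hq
    (fun x hx => by
      rw [deriv.fun_neg', deriv.fun_neg]
      linarith [heq x (hx₀₁.trans hx.le), neg_abs_le (f x), hf' x hx])
    hgrowth.neg_left ((neg_le_abs _).trans hK₁)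
  exact ⟨K, x₁, fun x hx => abs_le.2 ⟨by linarith [hlower x hx], hupper x hx⟩⟩

theorem stmt_12 (x₀ c₀ C : ℝ) (N : ℕ) (hc₀ : 0 < c₀) (hC : 0 < C)
    (u q f : ℝ → ℝ)
    (hu : ContDiffOn ℝ 2 u (Set.Ici x₀))
    (hq : ContinuousOn q (Set.Ici x₀))
    (hqtop : Tendsto q atTop atTop)
    (hugrowth : ∀ x ≥ x₀, |u x| ≤ C * (1 + x)^N)
    (heq : ∀ x ≥ x₀, -(deriv (deriv u) x) + q x * u x = f x)
    (hf : ∀ x ≥ x₀, |f x| ≤ C * Real.exp (-c₀ * x)) :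
    ∃ C₁ x₁ : ℝ, ∀ x ≥ x₁, |u x| ≤ C₁ * Real.exp (-c₀ * x) :=
  stmt_12_general x₀ c₀ C N hc₀ hC u q f hu hqtop hugrowth heq hf
end

section
/- Suppose u, q : [x₀, ∞) → ℝ are smooth with |q(x)| ≤ C e^{-c₀ x}, and -u'' + q u = f with |f(x)| ≤ C e^{-c₀ x} for some c₀, C > 0, and u is bounded together with u'. Then there exist constants a₁, b₁ ∈ ℝ such that for any c₁ ∈ (0, c₀), u(x) = a₁ + b₁ x + O(e^{-c₁ x}) as x → +∞. -/
/-!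
Since `|q|, |f| ≤ C e^{-c₀ x}` and `|u| ≤ B`, the equation gives `|u''| ≤ C (B + 1) e^{-c₀ x}`.
A function whose derivative is bounded by `M e^{-c x}` is Cauchy at infinity and converges to
a limit at rate `(M / c) e^{-c x}`. Applied to `u'` this gives `u' = b₁ + O(e^{-c₀ x})`, and
applied to `u - b₁ x` it gives `u = a₁ + b₁ x + O(e^{-c₀ x})`, which is stronger than the claim.
-/

open Filter Set Real Topology

lemma exists_dist_le_of_dist_le_of_tendsto_zero {E : Type*} [PseudoMetricSpace E]
    [CompleteSpace E] {h : ℝ → E} {g : ℝ → ℝ} {a : ℝ} (hg : Tendsto g atTop (𝓝 0))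
    (hh : ∀ x ≥ a, ∀ y ≥ x, dist (h x) (h y) ≤ g x) :
    ∃ L, ∀ x ≥ a, dist (h x) L ≤ g x := by
  have hcauchy : CauchySeq h := Metric.cauchySeq_iff'.2 fun ε hε => by
    obtain ⟨N, hNε, hNa⟩ := ((hg.eventually (gt_mem_nhds hε)).and (eventually_ge_atTop a)).exists
    exact ⟨N, fun n hn => (dist_comm _ _).trans_lt ((hh N hNa n hn).trans_lt hNε)⟩
  obtain ⟨L, hL⟩ := cauchySeq_tendsto_of_complete hcauchy
  refine ⟨L, fun x hx => le_of_tendsto (tendsto_const_nhds.dist hL) ?_⟩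
  filter_upwards [eventually_ge_atTop x] with y hy using hh x hx y hy

section ExpDecay

variable {E : Type*} [NormedAddCommGroup E] [NormedSpace ℝ E] {h h' : ℝ → E} {a c M : ℝ}

lemma norm_sub_le_of_norm_deriv_le_exp (hc : 0 < c) (hd : ∀ x ≥ a, HasDerivAt h (h' x) x)
    (hb : ∀ x ≥ a, ‖h' x‖ ≤ M * exp (-c * x)) {x y : ℝ} (hx : a ≤ x) (hxy : x ≤ y) :
    ‖h y - h x‖ ≤ M / c * (exp (-c * x) - exp (-c * y)) := by
  have hB : ∀ t, HasDerivAt (fun t => M / c * (exp (-c * x) - exp (-c * t)))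
      (M * exp (-c * t)) t := fun t =>
    ((((hasDerivAt_id' t).const_mul (-c)).exp.const_sub _).const_mul (M / c)).congr_deriv
      (by field_simp)
  refine image_norm_le_of_norm_deriv_right_le_deriv_boundary (f := fun t => h t - h x)
    (fun t ht => ((hd t (hx.trans ht.1)).continuousAt.sub continuousAt_const).continuousWithinAt)
    (fun t ht => ((hd t (hx.trans ht.1)).sub_const (h x)).hasDerivWithinAt)
    (by simp) hB (fun t ht => hb t (hx.trans ht.1)) ⟨hxy, le_rfl⟩

lemma exists_norm_sub_le_of_norm_deriv_le_exp [CompleteSpace E] (hc : 0 < c)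
    (hd : ∀ x ≥ a, HasDerivAt h (h' x) x) (hb : ∀ x ≥ a, ‖h' x‖ ≤ M * exp (-c * x)) :
    ∃ L, ∀ x ≥ a, ‖h x - L‖ ≤ M / c * exp (-c * x) := by
  have hM : 0 ≤ M := nonneg_of_mul_nonneg_left ((norm_nonneg _).trans (hb a le_rfl)) (exp_pos _)
  have hg : Tendsto (fun x => M / c * exp (-c * x)) atTop (𝓝 0) := by
    simpa using ((tendsto_exp_neg_atTop_nhds_zero.comp (tendsto_id.const_mul_atTop hc)).const_mul
      (M / c))
  simp_rw [← dist_eq_norm]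
  refine exists_dist_le_of_dist_le_of_tendsto_zero hg fun x hx y hy => ?_
  calc dist (h x) (h y) = ‖h y - h x‖ := dist_eq_norm' _ _
    _ ≤ M / c * (exp (-c * x) - exp (-c * y)) := norm_sub_le_of_norm_deriv_le_exp hc hd hb hx hy
    _ ≤ M / c * exp (-c * x) := by gcongr; exact sub_le_self _ (exp_pos _).le

end ExpDecay

lemma abs_le_mul_add_one_of_neg_add_mul_eq {w q u f K B : ℝ} (h : -w + q * u = f)
    (hq : |q| ≤ K) (hf : |f| ≤ K) (hu : |u| ≤ B) : |w| ≤ K * (B + 1) :=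
  calc |w| = |q * u - f| := by rw [← h]; ring_nf
    _ ≤ |q| * |u| + |f| := by rw [← abs_mul]; exact abs_sub _ _
    _ ≤ K * B + K := add_le_add (mul_le_mul hq hu (abs_nonneg _) ((abs_nonneg _).trans hq)) hf
    _ = K * (B + 1) := by ring

lemma hasDerivAt_deriv_of_contDiffOn_two {u : ℝ → ℝ} {s : Set ℝ} (hu : ContDiffOn ℝ 2 u s)
    (hs : IsOpen s) {x : ℝ} (hx : x ∈ s) :
    HasDerivAt u (deriv u x) x ∧ HasDerivAt (deriv u) (deriv (deriv u) x) x :=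
  ⟨((hu.differentiableOn (by norm_num)).differentiableAt (hs.mem_nhds hx)).hasDerivAt,
    (((hu.deriv_of_isOpen hs (m := 1) (by norm_num)).differentiableOn one_ne_zero).differentiableAt
      (hs.mem_nhds hx)).hasDerivAt⟩

theorem stmt_13_general (x₀ c₀ C : ℝ) (hc₀ : 0 < c₀)
    (u q f : ℝ → ℝ)
    (hu : ContDiffOn ℝ 2 u (Set.Ici x₀))
    (hq : ∀ x ≥ x₀, |q x| ≤ C * Real.exp (-c₀ * x))
    (heq : ∀ x ≥ x₀, -(deriv (deriv u) x) + q x * u x = f x)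
    (hf : ∀ x ≥ x₀, |f x| ≤ C * Real.exp (-c₀ * x))
    (hub : ∃ B, ∀ x ≥ x₀, |u x| ≤ B) :
    ∃ a₁ b₁ : ℝ, ∀ c₁, 0 < c₁ → c₁ < c₀ →
      ∃ C₁ x₁ : ℝ, ∀ x ≥ x₁, |u x - (a₁ + b₁ * x)| ≤ C₁ * Real.exp (-c₁ * x) := by
  obtain ⟨B, hB⟩ := hub
  have hderiv : ∀ x ≥ x₀ + 1,
      HasDerivAt u (deriv u x) x ∧ HasDerivAt (deriv u) (deriv (deriv u) x) x := fun x hx =>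
    hasDerivAt_deriv_of_contDiffOn_two (hu.mono Ioi_subset_Ici_self) isOpen_Ioi
      (show x₀ < x by linarith)
  have hu'' : ∀ x ≥ x₀ + 1, ‖deriv (deriv u) x‖ ≤ C * (B + 1) * exp (-c₀ * x) := fun x hx => by
    have hx : x ≥ x₀ := by linarith
    rw [norm_eq_abs, mul_right_comm]
    exact abs_le_mul_add_one_of_neg_add_mul_eq (heq x hx) (hq x hx) (hf x hx) (hB x hx)
  obtain ⟨b₁, hb₁⟩ :=
    exists_norm_sub_le_of_norm_deriv_le_exp hc₀ (fun x hx => (hderiv x hx).2) hu''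
  obtain ⟨a₁, ha₁⟩ := exists_norm_sub_le_of_norm_deriv_le_exp (h := fun x => u x - b₁ * x) hc₀
    (h' := fun x => deriv u x - b₁)
    (fun x hx => ((hderiv x hx).1.sub ((hasDerivAt_id' x).const_mul b₁)).congr_deriv
      (by rw [mul_one])) hb₁
  refine ⟨a₁, b₁, fun c₁ _ hc₁ => ⟨C * (B + 1) / c₀ / c₀, max (x₀ + 1) 0, fun x hx => ?_⟩⟩
  obtain ⟨hx₁, hx₀⟩ := max_le_iff.1 hx
  have hdecay := ha₁ x hx₁
  have hC₁ : 0 ≤ C * (B + 1) / c₀ / c₀ :=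
    nonneg_of_mul_nonneg_left ((norm_nonneg _).trans hdecay) (exp_pos _)
  calc |u x - (a₁ + b₁ * x)| = ‖u x - b₁ * x - a₁‖ := by rw [norm_eq_abs, sub_sub, add_comm a₁]
    _ ≤ C * (B + 1) / c₀ / c₀ * exp (-c₀ * x) := hdecay
    _ ≤ C * (B + 1) / c₀ / c₀ * exp (-c₁ * x) := by gcongr

theorem stmt_13 (x₀ c₀ C : ℝ) (hc₀ : 0 < c₀) (hC : 0 < C)
    (u q f : ℝ → ℝ)
    (hu : ContDiffOn ℝ 2 u (Set.Ici x₀))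
    (hq : ∀ x ≥ x₀, |q x| ≤ C * Real.exp (-c₀ * x))
    (heq : ∀ x ≥ x₀, -(deriv (deriv u) x) + q x * u x = f x)
    (hf : ∀ x ≥ x₀, |f x| ≤ C * Real.exp (-c₀ * x))
    (hub : ∃ B, ∀ x ≥ x₀, |u x| ≤ B)
    (hub' : ∃ B, ∀ x ≥ x₀, |deriv u x| ≤ B) :
    ∃ a₁ b₁ : ℝ, ∀ c₁, 0 < c₁ → c₁ < c₀ →
      ∃ C₁ x₁ : ℝ, ∀ x ≥ x₁, |u x - (a₁ + b₁ * x)| ≤ C₁ * Real.exp (-c₁ * x) :=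
  stmt_13_general x₀ c₀ C hc₀ u q f hu hq heq hf hub
end

section
/- Let φ ∈ C²[0, ∞) be bounded and satisfy -φ'' + (3 U² - 1) φ = 0 on (0, ∞), where U(z) = tanh(z/√2). If φ(0) = 0, then φ ≡ 0. -/
/-!
The linearized operator has the explicit positive solution `ψ = 1 - U² = √2 U'`, so for any
solution `φ` the Wronskian `φ' ψ - φ ψ'` is a constant `c` and `(φ / ψ)' = c / ψ²`. Since
`U / ψ²` has derivative at most `2√2 / ψ²` while `U / ψ = sinh (√2 z) / 2` is unbounded,
`c ≠ 0` would make `φ` unbounded. Hence `φ = a ψ` on `(0, ∞)`, and `φ 0 = 0 = a ψ 0 = a`.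
-/

open Real Set Filter

namespace Real

theorem one_sub_tanh_sq (x : ℝ) : 1 - tanh x ^ 2 = (cosh x ^ 2)⁻¹ := by
  have := (cosh_pos x).ne'
  rw [tanh_eq_sinh_div_cosh, div_pow, cosh_sq]
  field_simp
  ring

theorem hasDerivAt_tanh (x : ℝ) : HasDerivAt tanh (1 - tanh x ^ 2) x := by
  have h := (hasDerivAt_sinh x).div (hasDerivAt_cosh x) (cosh_pos x).ne'
  rw [show sinh / cosh = tanh from funext fun y => (tanh_eq_sinh_div_cosh y).symm] at h
  refine h.congr_deriv ?_
  rw [one_sub_tanh_sq, ← one_div, ← cosh_sq_sub_sinh_sq x]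
  ring

theorem tanh_div_one_sub_tanh_sq (x : ℝ) : tanh x / (1 - tanh x ^ 2) = sinh (2 * x) / 2 := by
  have := (cosh_pos x).ne'
  rw [one_sub_tanh_sq, tanh_eq_sinh_div_cosh, sinh_two_mul]
  field_simp

end Real

theorem IsOpen.exists_eq_const_of_hasDerivAt_zero {𝕜 G : Type*} [RCLike 𝕜]
    [NormedAddCommGroup G] [NormedSpace 𝕜 G] {f : 𝕜 → G} {s : Set 𝕜} (hs : IsOpen s)
    (hs' : IsPreconnected s) (hf : ∀ x ∈ s, HasDerivAt f 0 x) : ∃ a, ∀ x ∈ s, f x = a :=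
  hs.exists_is_const_of_deriv_eq_zero hs'
    (fun x hx => (hf x hx).differentiableAt.differentiableWithinAt) fun x hx => (hf x hx).deriv

theorem wronskian_hasDerivAt {q φ φ' ψ ψ' : ℝ → ℝ} {x : ℝ}
    (hφ : HasDerivAt φ (φ' x) x) (hφ' : HasDerivAt φ' (q x * φ x) x)
    (hψ : HasDerivAt ψ (ψ' x) x) (hψ' : HasDerivAt ψ' (q x * ψ x) x) :
    HasDerivAt (fun y => φ' y * ψ y - φ y * ψ' y) 0 x :=
  ((hφ'.mul hψ).sub (hφ.mul hψ')).congr_deriv (by ring)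

noncomputable def kink (z : ℝ) : ℝ := tanh (z / √2)

-- `√2 • deriv kink`, the translation mode of the kink.
noncomputable def kinkMode (z : ℝ) : ℝ := 1 - kink z ^ 2

theorem kinkMode_pos (z : ℝ) : 0 < kinkMode z := sub_pos.2 (tanh_sq_lt_one _)

theorem kinkMode_le_one (z : ℝ) : kinkMode z ≤ 1 := by
  unfold kinkMode; nlinarith [sq_nonneg (kink z)]

theorem kinkMode_zero : kinkMode 0 = 1 := by simp [kinkMode, kink]

theorem hasDerivAt_kink (z : ℝ) : HasDerivAt kink (kinkMode z / √2) z := by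
  have h := (hasDerivAt_tanh (z / √2)).comp z ((hasDerivAt_id z).div_const √2)
  exact h.congr_deriv (by simp [kinkMode, kink, div_eq_mul_inv])

theorem hasDerivAt_kinkMode (z : ℝ) : HasDerivAt kinkMode (-√2 * kink z * kinkMode z) z := by
  have h := ((hasDerivAt_kink z).pow 2).const_sub 1
  refine h.congr_deriv ?_
  have h2 : √2 ^ 2 = 2 := sq_sqrt zero_le_two
  field_simp
  simp only [Nat.cast_ofNat]
  linear_combination (kink z * kinkMode z) * h2

theorem continuous_kinkMode : Continuous kinkMode :=
  continuous_iff_continuousAt.2 fun z => (hasDerivAt_kinkMode z).continuousAt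

theorem hasDerivAt_neg_sqrt_two_mul_kink_mul_kinkMode (z : ℝ) :
    HasDerivAt (fun z => -√2 * kink z * kinkMode z) ((3 * kink z ^ 2 - 1) * kinkMode z) z := by
  have h := ((hasDerivAt_kink z).const_mul (-√2)).mul (hasDerivAt_kinkMode z)
  refine h.congr_deriv ?_
  have h2 : √2 ^ 2 = 2 := sq_sqrt zero_le_two
  rw [show -√2 * (kinkMode z / √2) = -kinkMode z by field_simp]
  unfold kinkMode
  linear_combination (kink z ^ 2 * (1 - kink z ^ 2)) * h2

theorem le_kink_div_kinkMode {z : ℝ} (hz : 0 ≤ z) : z / √2 ≤ kink z / kinkMode z := by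
  rw [kinkMode, kink, tanh_div_one_sub_tanh_sq]
  have h : 2 * (z / √2) ≤ sinh (2 * (z / √2)) := self_le_sinh_iff.2 (by positivity)
  linarith

theorem hasDerivAt_kink_div_kinkMode_sq (z : ℝ) :
    HasDerivAt (fun z => kink z / kinkMode z ^ 2)
      ((1 + 3 * kink z ^ 2) / (√2 * kinkMode z ^ 2)) z := by
  have hψ := (kinkMode_pos z).ne'
  have h := (hasDerivAt_kink z).div ((hasDerivAt_kinkMode z).pow 2) (pow_ne_zero 2 hψ)
  refine h.congr_deriv ?_
  have h2 : √2 ^ 2 = 2 := sq_sqrt zero_le_two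
  simp only [Pi.pow_apply, Nat.cast_ofNat, Nat.add_one_sub_one, pow_one]
  field_simp
  unfold kinkMode
  linear_combination (2 * kink z ^ 2) * h2

theorem tendsto_mul_kinkMode_atTop {g : ℝ → ℝ} {c : ℝ} (hc : 0 < c)
    (hg : ∀ z > 0, HasDerivAt g (c / kinkMode z ^ 2) z) :
    Tendsto (fun z => g z * kinkMode z) atTop atTop := by
  -- `k • kink / kinkMode ^ 2` has derivative at most `c / kinkMode ^ 2`, so `F` is monotone,
  -- and its product with `kinkMode` is at least `c z / 4`.
  set k := c / (2 * √2)
  set F := fun z => g z - k * (kink z / kinkMode z ^ 2)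
  have hF : ∀ z > 0, HasDerivAt F (3 * c / (4 * kinkMode z)) z := fun z hz => by
    refine ((hg z hz).sub ((hasDerivAt_kink_div_kinkMode_sq z).const_mul k)).congr_deriv ?_
    have hψ := (kinkMode_pos z).ne'
    have h2 : √2 ^ 2 = 2 := sq_sqrt zero_le_two
    simp only [k]
    field_simp
    unfold kinkMode
    rw [h2]
    ring
  have hF_mono : MonotoneOn F (Ici 1) := by
    refine monotoneOn_of_hasDerivWithinAt_nonneg (f' := fun z => 3 * c / (4 * kinkMode z))
      (convex_Ici 1)
      (fun z hz => (hF z (by linarith [mem_Ici.1 hz])).continuousAt.continuousWithinAt)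
      (fun z hz => ?_) (fun z _ => by have := kinkMode_pos z; positivity)
    rw [interior_Ici] at hz
    exact (hF z (by linarith [mem_Ioi.1 hz])).hasDerivWithinAt
  have h_lower : ∀ z ≥ 1, -|F 1| + c / 4 * z ≤ g z * kinkMode z := by
    intro z hz
    have hψ := kinkMode_pos z
    have hψ1 := kinkMode_le_one z
    have h1 : F 1 ≤ F z := hF_mono self_mem_Ici hz hz
    have hgrow := le_kink_div_kinkMode (z := z) (by linarith)
    have hsplit : g z * kinkMode z = F z * kinkMode z + k * (kink z / kinkMode z) := by
      simp only [F]; field_simp; ring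
    have hk : k * (z / √2) = c / 4 * z := by
      have h2 : √2 ^ 2 = 2 := sq_sqrt zero_le_two
      simp only [k]; field_simp; rw [h2]; norm_num
    have hk_grow : k * (z / √2) ≤ k * (kink z / kinkMode z) :=
      mul_le_mul_of_nonneg_left hgrow (by positivity)
    have hF_lower : -|F 1| ≤ F z * kinkMode z := by
      nlinarith [neg_abs_le (F 1), abs_nonneg (F 1)]
    linarith
  refine tendsto_atTop_mono' _ (eventually_ge_atTop 1 |>.mono h_lower) ?_
  exact tendsto_atTop_add_const_left _ _ (tendsto_id.const_mul_atTop (by positivity))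

theorem tendsto_abs_mul_kinkMode_atTop {g : ℝ → ℝ} {c : ℝ} (hc : c ≠ 0)
    (hg : ∀ z > 0, HasDerivAt g (c / kinkMode z ^ 2) z) :
    Tendsto (fun z => |g z * kinkMode z|) atTop atTop := by
  rcases hc.lt_or_gt with hc | hc
  · have hneg : ∀ z > 0, HasDerivAt (-g) (-c / kinkMode z ^ 2) z := fun z hz => by
      simpa only [neg_div] using (hg z hz).neg
    refine tendsto_atTop_mono (fun z => ?_) (tendsto_mul_kinkMode_atTop (neg_pos.2 hc) hneg)
    rw [Pi.neg_apply, neg_mul]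
    exact neg_le_abs _
  · exact tendsto_atTop_mono (fun z => le_abs_self _) (tendsto_mul_kinkMode_atTop hc hg)

theorem exists_eq_mul_kinkMode_of_bounded {φ φ' : ℝ → ℝ} {B : ℝ}
    (hφ : ∀ z > 0, HasDerivAt φ (φ' z) z)
    (hφ' : ∀ z > 0, HasDerivAt φ' ((3 * kink z ^ 2 - 1) * φ z) z)
    (hB : ∀ z > 0, |φ z| ≤ B) : ∃ a, ∀ z > 0, φ z = a * kinkMode z := by
  obtain ⟨c, hc⟩ := isOpen_Ioi.exists_eq_const_of_hasDerivAt_zero isPreconnected_Ioi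
    fun z (hz : 0 < z) => wronskian_hasDerivAt (q := fun z => 3 * kink z ^ 2 - 1)
      (ψ' := fun z => -√2 * kink z * kinkMode z) (hφ z hz) (hφ' z hz) (hasDerivAt_kinkMode z)
      (hasDerivAt_neg_sqrt_two_mul_kink_mul_kinkMode z)
  have hquot : ∀ z > 0, HasDerivAt (fun z => φ z / kinkMode z) (c / kinkMode z ^ 2) z :=
    fun z hz => ((hφ z hz).div (hasDerivAt_kinkMode z) (kinkMode_pos z).ne').congr_deriv
      (by rw [← hc z hz])
  have hc0 : c = 0 := by
    by_contra hc0
    obtain ⟨z, hzB, hz⟩ := ((tendsto_abs_mul_kinkMode_atTop hc0 hquot).eventually_gt_atTop B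
      |>.and (eventually_gt_atTop 0)).exists
    rw [div_mul_cancel₀ _ (kinkMode_pos z).ne'] at hzB
    linarith [hB z hz]
  obtain ⟨a, ha⟩ := isOpen_Ioi.exists_eq_const_of_hasDerivAt_zero
    (f := fun z => φ z / kinkMode z) isPreconnected_Ioi fun z (hz : 0 < z) => by
      simpa only [hc0, zero_div] using hquot z hz
  exact ⟨a, fun z hz => by rw [← ha z hz, div_mul_cancel₀ _ (kinkMode_pos z).ne']⟩

theorem stmt_18 (φ : ℝ → ℝ)
    (hφ : ContDiffOn ℝ 2 φ (Set.Ici 0))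
    (hbdd : ∃ B, ∀ z ≥ (0:ℝ), |φ z| ≤ B)
    (heq : ∀ z > (0:ℝ),
      -(deriv (deriv φ) z) + (3 * (Real.tanh (z / Real.sqrt 2))^2 - 1) * φ z = 0)
    (h0 : φ 0 = 0) :
    ∀ z ≥ (0:ℝ), φ z = 0 := by
  obtain ⟨B, hB⟩ := hbdd
  have hφ₂ : ContDiffOn ℝ 2 φ (Ioi 0) := hφ.mono Ioi_subset_Ici_self
  have hφ₁ : ContDiffOn ℝ 1 (deriv φ) (Ioi 0) :=
    hφ₂.deriv_of_isOpen isOpen_Ioi (by norm_num)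
  have hd₁ : ∀ z > 0, HasDerivAt φ (deriv φ z) z := fun z hz =>
    ((hφ₂.differentiableOn (by norm_num)).differentiableAt (isOpen_Ioi.mem_nhds hz)).hasDerivAt
  have hd₂ : ∀ z > 0, HasDerivAt (deriv φ) ((3 * kink z ^ 2 - 1) * φ z) z := fun z hz =>
    ((hφ₁.differentiableOn one_ne_zero).differentiableAt (isOpen_Ioi.mem_nhds hz)).hasDerivAt
      |>.congr_deriv (by unfold kink; linarith [heq z hz])
  obtain ⟨a, ha⟩ := exists_eq_mul_kinkMode_of_bounded hd₁ hd₂ fun z hz => hB z hz.le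
  have h_eq : EqOn φ (fun z => a * kinkMode z) (Ici 0) :=
    (show EqOn φ (fun z => a * kinkMode z) (Ioi 0) from ha).of_subset_closure hφ.continuousOn
      (continuous_const.mul continuous_kinkMode).continuousOn Ioi_subset_Ici_self
      (closure_Ioi 0).ge
  have ha0 : 0 = a := by simpa [h0, kinkMode_zero] using h_eq self_mem_Ici
  intro z hz
  simpa [← ha0] using h_eq hz
end

section
/- Let v₁, v₂ : ℝ → ℝ be positive C² solutions of -v₁'' + v₁³ - v₁ + Λ v₂² v₁ = 0, -v₂'' + v₂³ - v₂ + Λ v₁² v₂ = 0 with Λ > 1, satisfying (v₁, v₂) → (0,1) at -∞ and (1,0) at +∞, with derivatives tending to 0 at ±∞. If v₁'(z) > 0 for all z, and there exist sequences zₙ± → ±∞ with v₂'(zₙ±) < 0, then v₂'(z) < 0 for all z ∈ ℝ. (Key computation: σ = v₂'/v₂ satisfies (v₂² σ')' = v₂² σ'' + 2 v₂ v₂' σ' and, using the equations and v₁' > 0, one gets (v₂² σ')' > 2 v₂⁴ σ, so σ cannot attain a nonnegative interior maximum, forcing σ < 0 on each [zₙ⁻, zₙ⁺].) -/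
/-!
Let `σ = v₂' / v₂`, so that `v₂² σ' = v₂ v₂'' - v₂'²`. Differentiating with the equation for `v₂''`
gives `(v₂² σ')' = 2 v₂³ v₂' + 2 Λ v₁ v₁' v₂²`. At a critical point of `σ` with `σ ≥ 0` this is
positive (as `v₁' > 0`), so `σ'' > 0` there and such a point cannot be a local maximum. But if
`v₂'(z₀) ≥ 0`, then `σ` is negative at `zₙ⁻ < z₀ < zₙ⁺` and nonnegative at `z₀`, hence has a
nonnegative interior maximum on `[zₙ⁻, zₙ⁺]`.
-/

open Filter Set

theorem not_isLocalMax_of_deriv_deriv_pos {f : ℝ → ℝ} {x₀ : ℝ} (hf : 0 < deriv (deriv f) x₀)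
    (hd : deriv f x₀ = 0) (hc : ContinuousAt f x₀) : ¬IsLocalMax f x₀ := by
  intro hmax
  have hconst : f =ᶠ[nhds x₀] fun _ ↦ f x₀ :=
    (hmax.and (isLocalMin_of_deriv_deriv_pos hf hd hc)).mono fun _ h ↦ le_antisymm h.1 h.2
  have hderiv : deriv f =ᶠ[nhds x₀] fun _ ↦ 0 := by simpa using hconst.deriv
  simp [hderiv.deriv_eq] at hf

theorem exists_isLocalMax_mem_Ioo {f : ℝ → ℝ} {a b x : ℝ} (hf : ContinuousOn f (Icc a b))
    (hx : x ∈ Icc a b) (ha : f a < f x) (hb : f b < f x) :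
    ∃ c ∈ Ioo a b, IsLocalMax f c ∧ f x ≤ f c := by
  obtain ⟨c, hc, hmax⟩ := isCompact_Icc.exists_isMaxOn ⟨x, hx⟩ hf
  have hac : a < c := hc.1.lt_of_ne (by rintro rfl; exact (hmax hx).not_gt ha)
  have hcb : c < b := hc.2.lt_of_ne (by rintro rfl; exact (hmax hx).not_gt hb)
  exact ⟨c, ⟨hac, hcb⟩, hmax.isLocalMax (Icc_mem_nhds hac hcb), hmax hx⟩

theorem continuous_logDeriv {v : ℝ → ℝ} (hv : ContDiff ℝ 1 v) (hv₀ : ∀ z, v z ≠ 0) :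
    Continuous (logDeriv v) :=
  hv.continuous_deriv_one.div hv.continuous hv₀

theorem hasDerivAt_logDeriv {v : ℝ → ℝ} {z : ℝ} (hv : DifferentiableAt ℝ v z)
    (hv' : DifferentiableAt ℝ (deriv v) z) (hz : v z ≠ 0) :
    HasDerivAt (logDeriv v) ((deriv (deriv v) z * v z - deriv v z ^ 2) / v z ^ 2) z :=
  (hv'.hasDerivAt.div hv.hasDerivAt hz).congr_deriv (by ring)

section CoupledSystem

variable {Λ : ℝ} {v₁ v₂ : ℝ → ℝ}

/- Substituting the equation for `v₂''` before differentiating avoids a third derivative of `v₂`. -/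
theorem hasDerivAt_deriv_deriv_mul_sub_deriv_sq (hv₁ : Differentiable ℝ v₁)
    (hv₂ : ContDiff ℝ 2 v₂)
    (heq : ∀ z, deriv (deriv v₂) z = v₂ z ^ 3 - v₂ z + Λ * v₁ z ^ 2 * v₂ z) (z : ℝ) :
    HasDerivAt (fun z ↦ deriv (deriv v₂) z * v₂ z - deriv v₂ z ^ 2)
      (2 * v₂ z ^ 3 * deriv v₂ z + 2 * Λ * v₁ z * deriv v₁ z * v₂ z ^ 2) z := by
  have H₁ := (hv₁ z).hasDerivAt
  have H₂ := (hv₂.differentiable two_ne_zero z).hasDerivAt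
  have H₂' := (hv₂.differentiable_deriv_two z).hasDerivAt
  simp_rw [heq]
  refine (((((H₂.fun_pow 3).sub H₂).add ((H₁.fun_pow 2).const_mul Λ |>.fun_mul H₂)).fun_mul H₂).sub
    (H₂'.fun_pow 2)).congr_deriv ?_
  simp only [Pi.add_apply, Pi.sub_apply, heq]
  push_cast
  ring

theorem deriv_deriv_logDeriv_pos (hΛ : 0 < Λ) (hv₁ : Differentiable ℝ v₁)
    (hv₂ : ContDiff ℝ 2 v₂)
    (heq : ∀ z, deriv (deriv v₂) z = v₂ z ^ 3 - v₂ z + Λ * v₁ z ^ 2 * v₂ z)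
    (hpos₂ : ∀ z, 0 < v₂ z) {c : ℝ} (hc : deriv (logDeriv v₂) c = 0) (hpos₁ : 0 < v₁ c)
    (hmono₁ : 0 < deriv v₁ c) (hv₂c : 0 ≤ deriv v₂ c) :
    0 < deriv (deriv (logDeriv v₂)) c := by
  have hσ' : deriv (logDeriv v₂) =
      fun z ↦ (deriv (deriv v₂) z * v₂ z - deriv v₂ z ^ 2) / v₂ z ^ 2 := funext fun z ↦
    (hasDerivAt_logDeriv (hv₂.differentiable two_ne_zero z) (hv₂.differentiable_deriv_two z)
      (hpos₂ z).ne').deriv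
  have hwc : deriv (deriv v₂) c * v₂ c - deriv v₂ c ^ 2 = 0 := by
    simpa [hσ', (hpos₂ c).ne'] using hc
  have hσ'' := (hasDerivAt_deriv_deriv_mul_sub_deriv_sq hv₁ hv₂ heq c).fun_div
    ((hv₂.differentiable two_ne_zero c).hasDerivAt.fun_pow 2) (pow_pos (hpos₂ c) 2).ne'
  rw [hσ', hσ''.deriv, hwc, zero_mul, sub_zero]
  have hv₂c_pos := hpos₂ c
  positivity

theorem not_isLocalMax_logDeriv_of_nonneg (hΛ : 0 < Λ) (hv₁ : Differentiable ℝ v₁)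
    (hv₂ : ContDiff ℝ 2 v₂)
    (heq : ∀ z, deriv (deriv v₂) z = v₂ z ^ 3 - v₂ z + Λ * v₁ z ^ 2 * v₂ z)
    (hpos₂ : ∀ z, 0 < v₂ z) {c : ℝ} (hpos₁ : 0 < v₁ c) (hmono₁ : 0 < deriv v₁ c)
    (hc : 0 ≤ logDeriv v₂ c) : ¬IsLocalMax (logDeriv v₂) c := by
  intro hmax
  have hv₂c : 0 ≤ deriv v₂ c := by simpa using (le_div_iff₀ (hpos₂ c)).mp hc
  exact not_isLocalMax_of_deriv_deriv_pos
    (deriv_deriv_logDeriv_pos hΛ hv₁ hv₂ heq hpos₂ hmax.deriv_eq_zero hpos₁ hmono₁ hv₂c)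
    hmax.deriv_eq_zero
    (continuous_logDeriv (hv₂.of_le one_le_two) fun z ↦ (hpos₂ z).ne').continuousAt hmax

end CoupledSystem

theorem stmt_19_general (Λ : ℝ) (hΛ : 1 < Λ) (v₁ v₂ : ℝ → ℝ)
    (hv₁ : ContDiff ℝ 2 v₁) (hv₂ : ContDiff ℝ 2 v₂)
    (hpos₁ : ∀ z, 0 < v₁ z) (hpos₂ : ∀ z, 0 < v₂ z)
    (heq₂ : ∀ z, -(deriv (deriv v₂) z) + (v₂ z)^3 - v₂ z + Λ * (v₁ z)^2 * v₂ z = 0)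
    (hmono₁ : ∀ z, 0 < deriv v₁ z)
    (zp zm : ℕ → ℝ)
    (hzp : Tendsto zp atTop atTop) (hzm : Tendsto zm atTop atBot)
    (hseq : ∀ n, deriv v₂ (zp n) < 0 ∧ deriv v₂ (zm n) < 0) :
    ∀ z, deriv v₂ z < 0 := by
  intro z₀
  by_contra! hz₀
  have heq : ∀ z, deriv (deriv v₂) z = v₂ z ^ 3 - v₂ z + Λ * v₁ z ^ 2 * v₂ z := fun z ↦ by
    linarith [heq₂ z]
  have hneg : ∀ n, logDeriv v₂ (zm n) < 0 ∧ logDeriv v₂ (zp n) < 0 := fun n ↦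
    ⟨div_neg_of_neg_of_pos (hseq n).2 (hpos₂ _), div_neg_of_neg_of_pos (hseq n).1 (hpos₂ _)⟩
  have hz₀' : 0 ≤ logDeriv v₂ z₀ := div_nonneg hz₀ (hpos₂ z₀).le
  obtain ⟨N, hN⟩ := (hzm.eventually (eventually_lt_atBot z₀)).exists
  obtain ⟨M, hM⟩ := (hzp.eventually (eventually_gt_atTop z₀)).exists
  obtain ⟨c, -, hmax, hc⟩ := exists_isLocalMax_mem_Ioo
    (continuous_logDeriv (hv₂.of_le one_le_two) fun z ↦ (hpos₂ z).ne').continuousOn ⟨hN.le, hM.le⟩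
    ((hneg N).1.trans_le hz₀') ((hneg M).2.trans_le hz₀')
  exact not_isLocalMax_logDeriv_of_nonneg (zero_lt_one.trans hΛ) (hv₁.differentiable two_ne_zero)
    hv₂ heq hpos₂ (hpos₁ c) (hmono₁ c) (hz₀'.trans hc) hmax

theorem stmt_19 (Λ : ℝ) (hΛ : 1 < Λ) (v₁ v₂ : ℝ → ℝ)
    (hv₁ : ContDiff ℝ 2 v₁) (hv₂ : ContDiff ℝ 2 v₂)
    (hpos₁ : ∀ z, 0 < v₁ z) (hpos₂ : ∀ z, 0 < v₂ z)
    (heq₁ : ∀ z, -(deriv (deriv v₁) z) + (v₁ z)^3 - v₁ z + Λ * (v₂ z)^2 * v₁ z = 0)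
    (heq₂ : ∀ z, -(deriv (deriv v₂) z) + (v₂ z)^3 - v₂ z + Λ * (v₁ z)^2 * v₂ z = 0)
    (hbot₁ : Tendsto v₁ atBot (nhds 0)) (hbot₂ : Tendsto v₂ atBot (nhds 1))
    (htop₁ : Tendsto v₁ atTop (nhds 1)) (htop₂ : Tendsto v₂ atTop (nhds 0))
    (hdbot₁ : Tendsto (deriv v₁) atBot (nhds 0)) (hdbot₂ : Tendsto (deriv v₂) atBot (nhds 0))
    (hdtop₁ : Tendsto (deriv v₁) atTop (nhds 0)) (hdtop₂ : Tendsto (deriv v₂) atTop (nhds 0))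
    (hmono₁ : ∀ z, 0 < deriv v₁ z)
    (zp zm : ℕ → ℝ)
    (hzp : Tendsto zp atTop atTop) (hzm : Tendsto zm atTop atBot)
    (hseq : ∀ n, deriv v₂ (zp n) < 0 ∧ deriv v₂ (zm n) < 0) :
    ∀ z, deriv v₂ z < 0 :=
  stmt_19_general Λ hΛ v₁ v₂ hv₁ hv₂ hpos₁ hpos₂ heq₂ hmono₁ zp zm hzp hzm hseq
end
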